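/- Let P and Q be posets on [n] with P ≤ Q (i.e., i ⪯_P j implies i ⪯_Q j). Then for every linear code C ⊆ F_q^n there exists a primary P-decomposition of C which is also a Q-decomposition of C. -/

import Mathlib

/-- `I` is an ideal of the poset `P` on `[n]`. -/
def IsPosetIdeal {n : ℕ} (P : PartialOrder (Fin n)) (I : Set (Fin n)) : Prop :=
  ∀ i ∈ I, ∀ j, P.le j i → j ∈ I

/-- The smallest ideal of `P` containing `X`. -/
def idealGen {n : ℕ} (P : PartialOrder (Fin n)) (X : Set (Fin n)) : Set (Fin n) :=
  ⋂₀ {I | IsPosetIdeal P I ∧ X ⊆ I}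

/-- The `P`-weight `ω_P(x) = |⟨supp(x)⟩|`. -/
noncomputable def posetWeight {F : Type*} [Field F] {n : ℕ} (P : PartialOrder (Fin n))
    (x : Fin n → F) : ℕ :=
  (idealGen P {i | x i ≠ 0}).ncard

/-- The `P`-distance `d_P(x,y) = ω_P(x - y)`. -/
noncomputable def posetDist {F : Type*} [Field F] {n : ℕ} (P : PartialOrder (Fin n))
    (x y : Fin n → F) : ℕ :=
  posetWeight P (x - y)

/-- A linear `P`-isometry of `F_q^n`. -/
def IsPIsometry {F : Type*} [Field F] {n : ℕ} (P : PartialOrder (Fin n))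
    (T : (Fin n → F) ≃ₗ[F] (Fin n → F)) : Prop :=
  ∀ x y, posetDist P (T x) (T y) = posetDist P x y

/-- The support of a subspace `D ⊆ F_q^n`. -/
def suppS {F : Type*} [Field F] {n : ℕ} (D : Submodule F (Fin n → F)) : Set (Fin n) :=
  {j | ∃ x ∈ D, x j ≠ 0}

/-- `C_0`: the subspace of all vectors vanishing on the support of `C`. -/
def coSupp {F : Type*} [Field F] {n : ℕ} (C : Submodule F (Fin n → F)) :
    Submodule F (Fin n → F) where
  carrier := {x | ∀ j ∈ suppS C, x j = 0}
  add_mem' := by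
    intro a b ha hb j hj
    simp only [Set.mem_setOf_eq] at ha hb ⊢
    rw [Pi.add_apply, ha j hj, hb j hj, add_zero]
  zero_mem' := by intro j _; rfl
  smul_mem' := by
    intro c a ha j hj
    simp only [Set.mem_setOf_eq] at ha ⊢
    rw [Pi.smul_apply, ha j hj, smul_zero]

/-- A decomposition `(C; C_0; C_1, …, C_r)` of a linear code `C ⊆ F_q^n`:
nonzero subspaces `C_1, …, C_r` with pairwise disjoint supports whose internal
direct sum is `C`.  (The distinguished part `C_0 = coSupp C` is determined by `C`.) -/
structure Decomposition {F : Type*} [Field F] {n : ℕ} (C : Submodule F (Fin n → F)) where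
  r : ℕ
  D : Fin r → Submodule F (Fin n → F)
  ne_bot : ∀ i, D i ≠ ⊥
  indep : iSupIndep D
  sup_eq : ⨆ i, D i = C
  disj : Pairwise fun i j => Disjoint (suppS (D i)) (suppS (D j))

/-- A `P`-decomposition of `C`: a decomposition of a code `C'` that is
`P`-equivalent to `C`. -/
structure PDecomposition {F : Type*} [Field F] {n : ℕ} (P : PartialOrder (Fin n))
    (C : Submodule F (Fin n → F)) where
  C' : Submodule F (Fin n → F)
  T : (Fin n → F) ≃ₗ[F] (Fin n → F)
  isom : IsPIsometry P T
  image : Submodule.map (T : (Fin n → F) →ₗ[F] (Fin n → F)) C = C'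
  dec : Decomposition C'

/-- A trivial `P`-decomposition of `C`: a single component, with
`|supp(C')| = |supp(C)|` and `|supp(C'_0)| = |supp(C_0)|`. -/
def PDecomposition.IsTrivial {F : Type*} [Field F] {n : ℕ} {P : PartialOrder (Fin n)}
    {C : Submodule F (Fin n → F)} (d : PDecomposition P C) : Prop :=
  d.dec.r = 1 ∧ (suppS d.C').ncard = (suppS C).ncard ∧
    (suppS (coSupp d.C')).ncard = (suppS (coSupp C)).ncard

/-- A code is `P`-irreducible if it admits no non-trivial `P`-decomposition. -/
def PIrreducible {F : Type*} [Field F] {n : ℕ} (P : PartialOrder (Fin n))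
    (C : Submodule F (Fin n → F)) : Prop :=
  ∀ d : PDecomposition P C, d.IsTrivial

/-- A `P`-decomposition is maximal if each of its components is `P`-irreducible. -/
def PDecomposition.IsMaximal {F : Type*} [Field F] {n : ℕ} {P : PartialOrder (Fin n)}
    {C : Submodule F (Fin n → F)} (d : PDecomposition P C) : Prop :=
  ∀ i, PIrreducible P (d.dec.D i)

/-- The complexity of a `P`-decomposition: `Σ_{i=1}^r q^{n_i - k_i}` where
`n_i = |supp(C'_i)|` and `k_i = dim C'_i`. -/
noncomputable def PDecomposition.complexity {F : Type*} [Field F] [Fintype F] {n : ℕ}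
    {P : PartialOrder (Fin n)} {C : Submodule F (Fin n → F)}
    (d : PDecomposition P C) : ℕ :=
  ∑ i, (Fintype.card F) ^ ((suppS (d.dec.D i)).ncard - Module.finrank F (d.dec.D i))

/-- A `P`-decomposition of `C` is primary if its complexity is minimal among all
`P`-decompositions of `C`. -/
def PDecomposition.IsPrimary {F : Type*} [Field F] [Fintype F] {n : ℕ}
    {P : PartialOrder (Fin n)} {C : Submodule F (Fin n → F)}
    (d : PDecomposition P C) : Prop :=
  ∀ d' : PDecomposition P C, d.complexity ≤ d'.complexity

/-- `O_P(C)`: the minimal complexity among all `P`-decompositions of `C`. -/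
noncomputable def minComplexity {F : Type*} [Field F] [Fintype F] {n : ℕ}
    (P : PartialOrder (Fin n)) (C : Submodule F (Fin n → F)) : ℕ :=
  sInf {m | ∃ d : PDecomposition P C, d.complexity = m}

/-!
A linear `P`-isometry `T` maps each ideal subspace `V_I = {x | supp x ⊆ I}` onto an ideal
subspace `V_J`. Induct on `I`, removing a maximal element `m`: if `T(V_{I \ {m}}) = V_J`, then
`T(V_I) ⊆ V_{J ∪ U}` with `U = ⟨supp T e_m⟩`, and equality holds by dimension, because the
vector `y ∈ T(V_I)` that is `1` on `J` and `T e_m` off `J` has `⟨supp y⟩ ⊇ J ∪ U` but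
`ω_P(y) ≤ |I|`.

Writing `Φ(I)` for this `J`, `Φ` preserves cardinality and intersections, so
`Φ⟨i⟩ \ Φ(⟨i⟩ \ {i})` contains a coordinate `τ i`, and then `τ i ∈ Φ(I) ↔ i ∈ I` for every ideal
`I`. Hence `τ` is a permutation, and `T` followed by the coordinate permutation `τ` sends `e_i`
into `V_⟨i⟩`. Such a map preserves `V_I` for every `P`-ideal `I`, hence for every `Q`-ideal when
`P ≤ Q`, so it is both a `P`- and a `Q`-isometry. Permuting coordinates does not change the
complexity, so transporting a primary `P`-decomposition along `τ` keeps it primary.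
-/

section CoordSubspace

variable {F ι : Type*} [Field F]

variable (F) in
def coordSubspace (A : Set ι) : Submodule F (ι → F) :=
  ⨅ i ∈ Aᶜ, LinearMap.ker (LinearMap.proj i)

theorem mem_coordSubspace {A : Set ι} {x : ι → F} :
    x ∈ coordSubspace F A ↔ Function.support x ⊆ A := by
  rw [Function.support_subset_iff']
  simp [coordSubspace, Submodule.mem_iInf]

theorem coordSubspace_mono {A B : Set ι} (h : A ⊆ B) : coordSubspace F A ≤ coordSubspace F B :=
  fun _ hx => mem_coordSubspace.2 ((mem_coordSubspace.1 hx).trans h)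

@[simp]
theorem coordSubspace_empty : coordSubspace F (∅ : Set ι) = ⊥ := by
  ext x
  simp [mem_coordSubspace, Function.support_eq_empty_iff]

theorem coordSubspace_inter (A B : Set ι) :
    coordSubspace F (A ∩ B) = coordSubspace F A ⊓ coordSubspace F B := by
  ext x
  simp [mem_coordSubspace, Set.subset_inter_iff]

theorem single_mem_coordSubspace [DecidableEq ι] {A : Set ι} {m : ι} (hm : m ∈ A) (c : F) :
    Pi.single m c ∈ coordSubspace F A :=
  mem_coordSubspace.2 (Pi.support_single_subset.trans (Set.singleton_subset_iff.2 hm))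

theorem finrank_coordSubspace [Finite ι] (A : Set ι) :
    Module.finrank F (coordSubspace F A) = A.ncard := by
  classical
  have := Fintype.ofFinite ι
  unfold coordSubspace
  rw [(LinearMap.iInfKerProjEquiv F (fun _ => F) disjoint_compl_right
    (Set.union_compl_self A).ge).finrank_eq, Module.finrank_fintype_fun_eq_card,
    Set.ncard_eq_toFinset_card', Set.toFinset_card]

end CoordSubspace

section Support

variable {F : Type*} [Field F] {n : ℕ}

theorem suppS_mono {D D' : Submodule F (Fin n → F)} (h : D ≤ D') : suppS D ⊆ suppS D' :=
  fun _ ⟨x, hx, hj⟩ => ⟨x, h hx, hj⟩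

theorem suppS_coordSubspace (A : Set (Fin n)) : suppS (coordSubspace F A) = A := by
  refine subset_antisymm (fun j ⟨x, hx, hj⟩ => mem_coordSubspace.1 hx hj) fun j hj => ?_
  exact ⟨Pi.single j 1, single_mem_coordSubspace hj 1, by simp⟩

theorem suppS_map_funCongrLeft (σ : Equiv.Perm (Fin n)) (D : Submodule F (Fin n → F)) :
    suppS (D.map (LinearEquiv.funCongrLeft F F σ : (Fin n → F) →ₗ[F] Fin n → F)) =
      σ ⁻¹' suppS D := by
  ext j
  constructor
  · rintro ⟨_, ⟨x, hx, rfl⟩, hj⟩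
    exact ⟨x, hx, hj⟩
  · rintro ⟨x, hx, hj⟩
    exact ⟨_, ⟨x, hx, rfl⟩, hj⟩

theorem ncard_suppS_map_funCongrLeft (σ : Equiv.Perm (Fin n)) (D : Submodule F (Fin n → F)) :
    (suppS (D.map (LinearEquiv.funCongrLeft F F σ : (Fin n → F) →ₗ[F] Fin n → F))).ncard =
      (suppS D).ncard := by
  rw [suppS_map_funCongrLeft, Set.ncard_preimage_of_injective_subset_range σ.injective (by simp)]

end Support

section PosetIdeal

variable {n : ℕ} {P : PartialOrder (Fin n)} {I J X Y : Set (Fin n)}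

theorem subset_idealGen : X ⊆ idealGen P X :=
  Set.subset_sInter fun _ hI => hI.2

theorem idealGen_subset (hI : IsPosetIdeal P I) (hXI : X ⊆ I) : idealGen P X ⊆ I :=
  Set.sInter_subset_of_mem ⟨hI, hXI⟩

theorem isPosetIdeal_idealGen (X : Set (Fin n)) : IsPosetIdeal P (idealGen P X) :=
  fun _ hi j hji => Set.mem_sInter.2 fun I hI => hI.1 _ (Set.mem_sInter.1 hi I hI) j hji

theorem idealGen_mono (h : X ⊆ Y) : idealGen P X ⊆ idealGen P Y :=
  idealGen_subset (isPosetIdeal_idealGen Y) (h.trans subset_idealGen)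

theorem mem_idealGen_singleton {i j : Fin n} : j ∈ idealGen P {i} ↔ P.le j i := by
  refine ⟨fun h => ?_, fun h => isPosetIdeal_idealGen {i} i (subset_idealGen rfl) j h⟩
  refine idealGen_subset (I := {k | P.le k i}) ?_ (Set.singleton_subset_iff.2 (P.le_refl i)) h
  exact fun k hk l hlk => P.le_trans _ _ _ hlk hk

theorem IsPosetIdeal.union (hI : IsPosetIdeal P I) (hJ : IsPosetIdeal P J) :
    IsPosetIdeal P (I ∪ J) := by
  rintro i (hi | hi) j hji
  exacts [Or.inl (hI i hi j hji), Or.inr (hJ i hi j hji)]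

theorem IsPosetIdeal.diff_singleton (hI : IsPosetIdeal P I) {m : Fin n}
    (hm : ∀ j ∈ I, P.le m j → j = m) : IsPosetIdeal P (I \ {m}) := by
  rintro i ⟨hiI, him⟩ j hji
  refine ⟨hI i hiI j hji, fun hjm => him ?_⟩
  rw [Set.mem_singleton_iff] at hjm ⊢
  subst hjm
  exact hm i hiI hji

theorem exists_maximal_mem (P : PartialOrder (Fin n)) (hX : X.Nonempty) :
    ∃ m ∈ X, ∀ j ∈ X, P.le m j → j = m := by
  obtain ⟨m, hm⟩ := @Set.Finite.exists_maximal _ P.toLE ⟨P.le_trans⟩ X X.toFinite hX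
  exact ⟨m, hm.1, fun j hj hmj => P.le_antisymm _ _ (hm.2 hj hmj) hmj⟩

end PosetIdeal

section Isometry

variable {F : Type*} [Field F] {n : ℕ} {P : PartialOrder (Fin n)}
  {T : (Fin n → F) ≃ₗ[F] (Fin n → F)}

theorem IsPIsometry.posetWeight_apply (hT : IsPIsometry P T) (x : Fin n → F) :
    posetWeight P (T x) = posetWeight P x := by
  simpa [posetDist] using hT x 0

theorem isPIsometry_of_map_coordSubspace_eq
    (h : ∀ I, IsPosetIdeal P I →
      (coordSubspace F I).map (T : (Fin n → F) →ₗ[F] Fin n → F) = coordSubspace F I) :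
    IsPIsometry P T := by
  have hgen : ∀ x, idealGen P (Function.support (T x)) = idealGen P (Function.support x) := by
    intro x
    refine congrArg Set.sInter (Set.ext fun I => and_congr_right fun hI => ?_)
    rw [← mem_coordSubspace, ← mem_coordSubspace]
    conv_lhs => rw [← h I hI]
    rw [Submodule.mem_map_equiv, LinearEquiv.symm_apply_apply]
  intro x y
  rw [posetDist, posetDist, ← map_sub]
  exact congrArg Set.ncard (hgen (x - y))

theorem map_coordSubspace_eq_of_single_mem
    (hT : ∀ i, T (Pi.single i 1) ∈ coordSubspace F (idealGen P {i})) {I : Set (Fin n)}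
    (hI : IsPosetIdeal P I) :
    (coordSubspace F I).map (T : (Fin n → F) →ₗ[F] Fin n → F) = coordSubspace F I := by
  refine Submodule.eq_of_le_of_finrank_le ?_ (T.finrank_map_eq _).ge
  rintro _ ⟨x, hx, rfl⟩
  rw [← Finset.univ_sum_single x, map_sum]
  refine Submodule.sum_mem _ fun i _ => ?_
  by_cases hi : x i = 0
  · simp [hi]
  have hiI : idealGen P {i} ⊆ I :=
    idealGen_subset hI (Set.singleton_subset_iff.2 (mem_coordSubspace.1 hx hi))
  rw [← mul_one (x i), ← smul_eq_mul, Pi.single_smul, map_smul]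
  exact Submodule.smul_mem _ _ (coordSubspace_mono hiI (hT i))

theorem isPIsometry_of_single_mem {R : PartialOrder (Fin n)}
    (hPR : ∀ i j : Fin n, P.le i j → R.le i j)
    (hT : ∀ i, T (Pi.single i 1) ∈ coordSubspace F (idealGen P {i})) : IsPIsometry R T :=
  isPIsometry_of_map_coordSubspace_eq fun _ hI =>
    map_coordSubspace_eq_of_single_mem hT fun i hi j hji => hI i hi j (hPR j i hji)

end Isometry

section IdealImage

variable {F : Type*} [Field F] {n : ℕ} {P : PartialOrder (Fin n)}
  {T : (Fin n → F) ≃ₗ[F] (Fin n → F)} {I J : Set (Fin n)}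

theorem IsPIsometry.ncard_union_idealGen_le (hT : IsPIsometry P T) (hI : IsPosetIdeal P I)
    {A : Set (Fin n)} (hAI : A ⊆ I) {m : Fin n} (hm : m ∈ I)
    (hAJ : (coordSubspace F A).map (T : (Fin n → F) →ₗ[F] Fin n → F) = coordSubspace F J) :
    (J ∪ idealGen P (Function.support (T (Pi.single m 1)))).ncard ≤ I.ncard := by
  classical
  set y : Fin n → F := fun l => if l ∈ J then 1 else T (Pi.single m 1) l
  obtain ⟨z, hz, hTz⟩ :
      y - T (Pi.single m 1) ∈ (coordSubspace F A).map (T : (Fin n → F) →ₗ[F] Fin n → F) := by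
    rw [hAJ, mem_coordSubspace, Function.support_subset_iff']
    intro l hl
    simp [y, hl]
  have hy : T (Pi.single m 1 + z) = y := by
    have hTz' : T z = y - T (Pi.single m 1) := hTz
    rw [map_add, hTz']
    abel
  have hsupp : J ∪ Function.support (T (Pi.single m 1)) ⊆ Function.support y := by
    rintro l (hl | hl) <;> by_cases hlJ : l ∈ J <;> simp_all [y]
  calc (J ∪ idealGen P (Function.support (T (Pi.single m 1)))).ncard
      ≤ posetWeight P y :=
        Set.ncard_le_ncard (Set.union_subset
          ((Set.subset_union_left.trans hsupp).trans subset_idealGen)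
          (idealGen_mono (Set.subset_union_right.trans hsupp))) (Set.toFinite _)
    _ = posetWeight P (Pi.single m 1 + z) := by rw [← hy, hT.posetWeight_apply]
    _ ≤ I.ncard :=
        Set.ncard_le_ncard (idealGen_subset hI (mem_coordSubspace.1
          (add_mem (single_mem_coordSubspace hm 1) (coordSubspace_mono hAI hz)))) (Set.toFinite _)

theorem IsPIsometry.exists_map_coordSubspace_eq (hT : IsPIsometry P T) (hI : IsPosetIdeal P I) :
    ∃ J, IsPosetIdeal P J ∧
      (coordSubspace F I).map (T : (Fin n → F) →ₗ[F] Fin n → F) = coordSubspace F J := by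
  induction I using WellFoundedLT.induction with
  | _ I ih =>
  rcases I.eq_empty_or_nonempty with rfl | hne
  · exact ⟨∅, fun _ h => h.elim, by simp⟩
  obtain ⟨m, hmI, hmax⟩ := exists_maximal_mem P hne
  obtain ⟨J, hJ, hJeq⟩ :=
    ih (I \ {m}) (Set.sdiff_singleton_ssubset.2 hmI) (hI.diff_singleton hmax)
  set U := idealGen P (Function.support (T (Pi.single m 1)))
  refine ⟨J ∪ U, hJ.union (isPosetIdeal_idealGen _), Submodule.eq_of_le_of_finrank_le ?_ ?_⟩
  · rintro _ ⟨x, hx, rfl⟩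
    have hx' : x - Pi.single m (x m) ∈ coordSubspace F (I \ {m}) := by
      refine mem_coordSubspace.2 (Function.support_subset_iff'.2 fun l hl => ?_)
      by_cases hlm : l = m
      · simp [hlm]
      · have hxl : x l = 0 := Function.notMem_support.1 fun h => hl ⟨mem_coordSubspace.1 hx h, hlm⟩
        simp [hxl, hlm]
    have hsplit : T x = T (x - Pi.single m (x m)) + x m • T (Pi.single m 1) := by
      rw [← map_smul, ← map_add, ← Pi.single_smul, smul_eq_mul, mul_one, sub_add_cancel]
    rw [LinearEquiv.coe_coe, hsplit]
    refine add_mem (coordSubspace_mono Set.subset_union_left (hJeq ▸ ⟨_, hx', rfl⟩))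
      (Submodule.smul_mem _ _ (coordSubspace_mono Set.subset_union_right ?_))
    exact mem_coordSubspace.2 subset_idealGen
  · rw [finrank_coordSubspace, LinearEquiv.finrank_map_eq, finrank_coordSubspace]
    exact hT.ncard_union_idealGen_le hI Set.sdiff_subset hmI hJeq

variable (T) in
def idealImage (I : Set (Fin n)) : Set (Fin n) :=
  suppS ((coordSubspace F I).map (T : (Fin n → F) →ₗ[F] Fin n → F))

theorem IsPIsometry.map_coordSubspace_eq_idealImage (hT : IsPIsometry P T)
    (hI : IsPosetIdeal P I) :
    (coordSubspace F I).map (T : (Fin n → F) →ₗ[F] Fin n → F) =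
      coordSubspace F (idealImage T I) := by
  obtain ⟨J, -, hJ⟩ := hT.exists_map_coordSubspace_eq hI
  rw [idealImage, hJ, suppS_coordSubspace]

theorem IsPIsometry.ncard_idealImage (hT : IsPIsometry P T) (hI : IsPosetIdeal P I) :
    (idealImage T I).ncard = I.ncard := by
  rw [← finrank_coordSubspace (F := F), ← hT.map_coordSubspace_eq_idealImage hI,
    LinearEquiv.finrank_map_eq, finrank_coordSubspace]

theorem idealImage_mono (h : I ⊆ J) : idealImage T I ⊆ idealImage T J :=
  suppS_mono (Submodule.map_mono (coordSubspace_mono h))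

theorem IsPIsometry.idealImage_inter (hT : IsPIsometry P T) (hI : IsPosetIdeal P I)
    (hJ : IsPosetIdeal P J) : idealImage T (I ∩ J) = idealImage T I ∩ idealImage T J := by
  rw [idealImage, coordSubspace_inter, Submodule.map_inf _ T.injective,
    hT.map_coordSubspace_eq_idealImage hI, hT.map_coordSubspace_eq_idealImage hJ,
    ← coordSubspace_inter, suppS_coordSubspace]

theorem IsPIsometry.exists_mem_idealImage_iff (hT : IsPIsometry P T) :
    ∃ τ : Fin n → Fin n, ∀ I, IsPosetIdeal P I → ∀ i, τ i ∈ idealImage T I ↔ i ∈ I := by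
  have hprin (i : Fin n) : IsPosetIdeal P (idealGen P {i}) := isPosetIdeal_idealGen _
  have hself (i : Fin n) : i ∈ idealGen P {i} := subset_idealGen rfl
  have hpunct (i : Fin n) : IsPosetIdeal P (idealGen P {i} \ {i}) :=
    (hprin i).diff_singleton fun j hj hij => P.le_antisymm _ _ (mem_idealGen_singleton.1 hj) hij
  have hne (i : Fin n) :
      (idealImage T (idealGen P {i}) \ idealImage T (idealGen P {i} \ {i})).Nonempty := by
    refine Set.sdiff_nonempty.2 fun hsub => (Set.ncard_le_ncard hsub (Set.toFinite _)).not_gt ?_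
    rw [hT.ncard_idealImage (hprin i), hT.ncard_idealImage (hpunct i)]
    exact Set.ncard_sdiff_singleton_lt_of_mem (hself i) (Set.toFinite _)
  choose τ hτ using hne
  refine ⟨τ, fun I hI i => ⟨fun h => ?_, fun h => ?_⟩⟩
  · by_contra hi
    have hsub : idealGen P {i} ∩ I ⊆ idealGen P {i} \ {i} :=
      fun j hj => ⟨hj.1, fun hji => hi (Set.mem_singleton_iff.1 hji ▸ hj.2)⟩
    refine (hτ i).2 (idealImage_mono hsub ?_)
    rw [hT.idealImage_inter (hprin i) hI]
    exact ⟨(hτ i).1, h⟩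
  · exact idealImage_mono (idealGen_subset hI (Set.singleton_subset_iff.2 h)) (hτ i).1

theorem IsPIsometry.exists_perm_single_mem (hT : IsPIsometry P T) :
    ∃ σ : Equiv.Perm (Fin n), ∀ i,
      (T.trans (LinearEquiv.funCongrLeft F F σ)) (Pi.single i 1) ∈
        coordSubspace F (idealGen P {i}) := by
  obtain ⟨τ, hτ⟩ := hT.exists_mem_idealImage_iff
  have hprin (i : Fin n) : IsPosetIdeal P (idealGen P {i}) := isPosetIdeal_idealGen _
  have hle {a b : Fin n} (hab : τ a = τ b) : P.le a b := by
    refine mem_idealGen_singleton.1 ((hτ _ (hprin b) a).1 ?_)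
    rw [hab]
    exact (hτ _ (hprin b) b).2 (subset_idealGen rfl)
  have hinj : τ.Injective := fun a b hab => P.le_antisymm _ _ (hle hab) (hle hab.symm)
  refine ⟨Equiv.ofBijective τ (Finite.injective_iff_bijective.1 hinj), fun i =>
    mem_coordSubspace.2 fun j hj => (hτ _ (hprin i) j).1 ?_⟩
  have hsingle : Pi.single i (1 : F) ∈ coordSubspace F (idealGen P {i}) :=
    single_mem_coordSubspace (subset_idealGen (Set.mem_singleton i)) 1
  have hTj : T (Pi.single i 1) (τ j) ≠ 0 := hj
  exact ⟨T (Pi.single i 1), Submodule.mem_map_of_mem hsingle, hTj⟩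

end IdealImage

section Decomposition

variable {F : Type*} [Field F] {n : ℕ} {P : PartialOrder (Fin n)} {C : Submodule F (Fin n → F)}

instance Decomposition.instNonempty : Nonempty (Decomposition C) := by
  by_cases h : C = ⊥
  · exact ⟨⟨0, Fin.elim0, fun i => i.elim0, iSupIndep_subsingleton _, by simp [h],
      fun i => i.elim0⟩⟩
  · exact ⟨⟨1, fun _ => C, fun _ => h, iSupIndep_subsingleton _, iSup_const,
      fun i j hij => (hij (Subsingleton.elim i j)).elim⟩⟩

instance PDecomposition.instNonempty : Nonempty (PDecomposition P C) :=
  let ⟨dec⟩ := Decomposition.instNonempty (C := C)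
  ⟨⟨C, LinearEquiv.refl F _, fun _ _ => rfl, Submodule.map_id C, dec⟩⟩

def Decomposition.permute (d : Decomposition C) (σ : Equiv.Perm (Fin n)) :
    Decomposition (C.map (LinearEquiv.funCongrLeft F F σ : (Fin n → F) →ₗ[F] Fin n → F)) where
  r := d.r
  D i := (d.D i).map (LinearEquiv.funCongrLeft F F σ : (Fin n → F) →ₗ[F] Fin n → F)
  ne_bot i := by
    rw [Ne, Submodule.map_eq_bot_iff]
    exact d.ne_bot i
  indep := d.indep.map_orderIso (Submodule.orderIsoMapComap _)
  sup_eq := by rw [← Submodule.map_iSup, d.sup_eq]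
  disj i j hij := by
    simp only [suppS_map_funCongrLeft]
    exact (d.disj hij).preimage σ

def PDecomposition.permute (d : PDecomposition P C) (σ : Equiv.Perm (Fin n))
    (h : IsPIsometry P (d.T.trans (LinearEquiv.funCongrLeft F F σ))) : PDecomposition P C where
  C' := d.C'.map (LinearEquiv.funCongrLeft F F σ : (Fin n → F) →ₗ[F] Fin n → F)
  T := d.T.trans (LinearEquiv.funCongrLeft F F σ)
  isom := h
  image := by rw [LinearEquiv.coe_trans, Submodule.map_comp, d.image]
  dec := d.dec.permute σ

theorem PDecomposition.complexity_permute [Fintype F] (d : PDecomposition P C)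
    (σ : Equiv.Perm (Fin n)) (h : IsPIsometry P (d.T.trans (LinearEquiv.funCongrLeft F F σ))) :
    (d.permute σ h).complexity = d.complexity := by
  exact Finset.sum_congr rfl fun i _ => congrArg₂ (fun a b => Fintype.card F ^ (a - b))
    (ncard_suppS_map_funCongrLeft σ (d.dec.D i)) (LinearEquiv.finrank_map_eq _ (d.dec.D i))

theorem PDecomposition.exists_isPrimary [Fintype F] (P : PartialOrder (Fin n))
    (C : Submodule F (Fin n → F)) : ∃ d : PDecomposition P C, d.IsPrimary :=
  ⟨Function.argmin complexity, fun d => Function.argmin_le complexity d⟩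

end Decomposition

/-- **Theorem 2.** If `P ≤ Q` (every `P`-relation is a `Q`-relation),
then every linear code `C` has a primary `P`-decomposition which is also a
`Q`-decomposition of `C`. -/
theorem primary_P_is_Q_decomposition {F : Type*} [Field F] [Fintype F] {n : ℕ}
    (P Q : PartialOrder (Fin n)) (hPQ : ∀ i j : Fin n, P.le i j → Q.le i j)
    (C : Submodule F (Fin n → F)) :
    ∃ d : PDecomposition P C, d.IsPrimary ∧
      ∃ S : (Fin n → F) ≃ₗ[F] (Fin n → F), IsPIsometry Q S ∧
        Submodule.map (S : (Fin n → F) →ₗ[F] (Fin n → F)) C = d.C' := by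
  obtain ⟨d, hd⟩ := PDecomposition.exists_isPrimary P C
  obtain ⟨σ, hσ⟩ := d.isom.exists_perm_single_mem
  let d' := d.permute σ (isPIsometry_of_single_mem (fun _ _ h => h) hσ)
  exact ⟨d', fun e => (d.complexity_permute σ _).trans_le (hd e), d'.T,
    isPIsometry_of_single_mem hPQ hσ, d'.image⟩
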